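/- For every real number φ, a controlled-phase gate followed by a SWAP of the two qubits is implemented, up to a global phase, with three CNOT gates and three single-qubit Rz rotations: exp(iφ/4) · CX₁₂ · CX₂₁ · (I₂ ⊗ Rz(−φ/2)) · CX₁₂ · (Rz(φ/2) ⊗ Rz(φ/2)) = SWAP · CP(φ). In particular, taking φ = 2π/2^k this implements a SWAP followed by the controlled phase gate R_k used in the quantum Fourier transform with CNOT-cost three. -/

import Mathlib

/-!
Both CNOTs are permutation matrices of the computational basis and the `Rz` layers are diagonal.
Pushing the diagonal `I₂ ⊗ Rz (-φ/2)` through the last CX₁₂ permutes its entries along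
`(a, b) ↦ (a, a ⊕ b)`, after which the three CNOTs compose to SWAP (the xor-swap trick).
What remains is a diagonal matrix whose entry at `|ab⟩` is `exp(iφ/4 · (1 + s a + s b − s (a ⊕ b)))`
with `s 0 = -1`, `s 1 = 1`; since `a ⊕ b = a + b − 2ab`, this exponent is `iφ · ab`, giving `CP φ`.
-/

open Kronecker

/-- `Rz θ` is the 2×2 complex matrix `diag(exp(−iθ/2), exp(iθ/2))`. -/
noncomputable def Rz (θ : ℝ) : Matrix (Fin 2) (Fin 2) ℂ :=
  Matrix.diagonal ![Complex.exp (-(θ : ℂ) * Complex.I / 2), Complex.exp ((θ : ℂ) * Complex.I / 2)]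

/-- `Ry θ` is the real rotation matrix by angle `θ/2`, regarded as a complex matrix. -/
noncomputable def Ry (θ : ℝ) : Matrix (Fin 2) (Fin 2) ℂ :=
  !![(Real.cos (θ / 2) : ℂ), -(Real.sin (θ / 2) : ℂ);
     (Real.sin (θ / 2) : ℂ), (Real.cos (θ / 2) : ℂ)]

/-- The `SX` gate `(1/2)·[[1+i, 1−i],[1−i, 1+i]]`. -/
noncomputable def SX : Matrix (Fin 2) (Fin 2) ℂ :=
  (1 / 2 : ℂ) • !![1 + Complex.I, 1 - Complex.I; 1 - Complex.I, 1 + Complex.I]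
/-- CNOT with control on the first qubit: sends `|a b⟩` to `|a (b ⊕ a)⟩`. -/
def CX₁₂ : Matrix (Fin 2 × Fin 2) (Fin 2 × Fin 2) ℂ :=
  Matrix.of fun p q => if p = (q.1, q.1 + q.2) then 1 else 0

/-- CNOT with control on the second qubit: sends `|a b⟩` to `|(a ⊕ b) b⟩`. -/
def CX₂₁ : Matrix (Fin 2 × Fin 2) (Fin 2 × Fin 2) ℂ :=
  Matrix.of fun p q => if p = (q.1 + q.2, q.2) then 1 else 0

/-- The SWAP gate: sends `|a b⟩` to `|b a⟩`. -/
def SWAP : Matrix (Fin 2 × Fin 2) (Fin 2 × Fin 2) ℂ :=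
  Matrix.of fun p q => if p = (q.2, q.1) then 1 else 0

/-- The controlled-phase gate `diag(1, 1, 1, exp(iφ))` (control on the first qubit). -/
noncomputable def CP (φ : ℝ) : Matrix (Fin 2 × Fin 2) (Fin 2 × Fin 2) ℂ :=
  Matrix.diagonal fun p => if p = (1, 1) then Complex.exp ((φ : ℂ) * Complex.I) else 1

open Matrix

section PermMatrix

variable {n R : Type*} [DecidableEq n]

lemma of_ite_eq_apply_eq_permMatrix_inv [Zero R] [One R] (σ : Equiv.Perm n) :
    Matrix.of (fun p q => if p = σ q then (1 : R) else 0) = σ⁻¹.permMatrix R := by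
  ext p q
  simp [PEquiv.toMatrix_apply, Equiv.symm_apply_eq]

lemma diagonal_mul_permMatrix [Fintype n] [NonAssocSemiring R] (d : n → R) (σ : Equiv.Perm n) :
    diagonal d * σ.permMatrix R = σ.permMatrix R * diagonal (d ∘ ⇑σ⁻¹) := by
  ext p q
  simp only [diagonal_mul, mul_diagonal, PEquiv.toMatrix_apply, Equiv.toPEquiv_apply,
    Option.mem_some_iff, Function.comp_apply]
  split_ifs with h
  · simp [← h]
  · rw [mul_zero, zero_mul]

end PermMatrix

def cx₁₂Perm : Equiv.Perm (Fin 2 × Fin 2) where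
  toFun p := (p.1, p.1 + p.2)
  invFun p := (p.1, p.2 - p.1)
  left_inv p := by simp
  right_inv p := by simp

def cx₂₁Perm : Equiv.Perm (Fin 2 × Fin 2) where
  toFun p := (p.1 + p.2, p.2)
  invFun p := (p.1 - p.2, p.2)
  left_inv p := by simp
  right_inv p := by simp

def swapPerm : Equiv.Perm (Fin 2 × Fin 2) := Equiv.prodComm _ _

lemma CX₁₂_eq_permMatrix : CX₁₂ = cx₁₂Perm⁻¹.permMatrix ℂ :=
  of_ite_eq_apply_eq_permMatrix_inv cx₁₂Perm

lemma CX₂₁_eq_permMatrix : CX₂₁ = cx₂₁Perm⁻¹.permMatrix ℂ :=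
  of_ite_eq_apply_eq_permMatrix_inv cx₂₁Perm

lemma SWAP_eq_permMatrix : SWAP = swapPerm⁻¹.permMatrix ℂ :=
  of_ite_eq_apply_eq_permMatrix_inv swapPerm

lemma CX₁₂_mul_CX₂₁_mul_CX₁₂ : CX₁₂ * CX₂₁ * CX₁₂ = SWAP := by
  rw [CX₁₂_eq_permMatrix, CX₂₁_eq_permMatrix, SWAP_eq_permMatrix, ← permMatrix_mul,
    ← permMatrix_mul]
  congr 1
  decide

lemma diagonal_mul_CX₁₂ (d : Fin 2 × Fin 2 → ℂ) :
    diagonal d * CX₁₂ = CX₁₂ * diagonal (d ∘ cx₁₂Perm) := by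
  rw [CX₁₂_eq_permMatrix, diagonal_mul_permMatrix, inv_inv]

/-- A controlled-phase gate followed by a SWAP is implemented, up to a global phase,
with three CNOT gates and three single-qubit `Rz` rotations. -/
theorem swap_cp_decomposition (φ : ℝ) :
    Complex.exp ((φ : ℂ) * Complex.I / 4) •
        (CX₁₂ * CX₂₁ * ((1 : Matrix (Fin 2) (Fin 2) ℂ) ⊗ₖ Rz (-φ / 2)) * CX₁₂ *
          (Rz (φ / 2) ⊗ₖ Rz (φ / 2))) = SWAP * CP φ := by
  simp only [Rz, ← diagonal_one, diagonal_kronecker_diagonal]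
  rw [Matrix.mul_assoc _ (diagonal _), diagonal_mul_CX₁₂, ← Matrix.mul_assoc,
    CX₁₂_mul_CX₂₁_mul_CX₁₂, Matrix.mul_assoc, diagonal_mul_diagonal, ← Matrix.mul_smul,
    ← diagonal_smul, CP]
  congr 2
  funext p
  fin_cases p <;> simp [cx₁₂Perm, ← Complex.exp_add] <;> ring_nf <;> exact Complex.exp_zero
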